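/- Let d ≥ 3 and let F ∈ (ℂ^n)^{⊗d} be a sharp, concise, symmetric tensor of minimal border rank, with corresponding degree-d polynomial p_F. Then π(Ann(F)_{𝟏−e_d}) = Ann(p_F)_{d−1}. -/

import Mathlib

/-!
Common setup, following the paper "On the abundance of minimal border rank symmetric
tensors verifying Comon's conjecture".

* `S = ℂ[α_{i,j} : 1 ≤ i ≤ d, 1 ≤ j ≤ n]` is modeled as `MvPolynomial (Fin d × Fin n) ℂ`,
  with the `ℤ^d`-grading in which `deg α_{i,j} = e_i`; `Scomp n d u` is the
  multidegree-`u` component (`u : Fin d → ℕ`).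
* `V = ℂ[β_1,…,β_n]` is modeled as `MvPolynomial (Fin n) ℂ` with its standard grading;
  `Vcomp n N` is the degree-`N` component.
* The graded duals `T` and `P` are modeled by the same polynomial rings, with `S`
  (resp. `V`) acting by differentiation (`apolar`); `ann F` is the apolar
  (annihilator) ideal of `F`.
* A tensor `F ∈ (ℂ^n)^{⊗d}` is an element of the multidegree-`(1,…,1)` component
  `Scomp n d (fun _ => 1)` (a multilinear form in the `x_{i,j}`).
-/

open MvPolynomial Submodule Module

noncomputable section

namespace BorderComon

/-- the multidegree-`u` graded component of `S`. -/
def Scomp (n d : ℕ) (u : Fin d → ℕ) : Submodule ℂ (MvPolynomial (Fin d × Fin n) ℂ) :=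
  weightedHomogeneousSubmodule ℂ (fun p : Fin d × Fin n => Pi.single p.1 1) u

/-- the degree-`N` graded component of `V`. -/
def Vcomp (n : ℕ) (N : ℕ) : Submodule ℂ (MvPolynomial (Fin n) ℂ) :=
  homogeneousSubmodule (Fin n) ℂ N

/-- the diagonal ring map `π : S → V`, `α_{i,j} ↦ β_j`. -/
def piAlg (n d : ℕ) : MvPolynomial (Fin d × Fin n) ℂ →ₐ[ℂ] MvPolynomial (Fin n) ℂ :=
  aeval (fun p : Fin d × Fin n => X p.2)

/-- `π` as a `ℂ`-linear map. -/
def piL (n d : ℕ) : MvPolynomial (Fin d × Fin n) ℂ →ₗ[ℂ] MvPolynomial (Fin n) ℂ :=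
  (piAlg n d).toLinearMap

/-- the ring map `ρ : S → V`, `α_{1,j} ↦ β_j` and `α_{i,j} ↦ 0` for `i ≥ 2`
(rows are `0`-indexed, so the first row is row `0`). -/
def rho (n d : ℕ) : MvPolynomial (Fin d × Fin n) ℂ →ₐ[ℂ] MvPolynomial (Fin n) ℂ :=
  aeval (fun p : Fin d × Fin n => if (p.1 : ℕ) = 0 then X p.2 else 0)

/-- the result of differentiating `F` by the monomial `X^a`:
`∂^a X^b = (∏_i b_i!/(b_i-a_i)!) X^{b-a}` (and `= 0` unless `a ≤ b`, which is
automatic since the descending factorial vanishes there). -/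
def diffMon {σ : Type*} (a : σ →₀ ℕ) (F : MvPolynomial σ ℂ) : MvPolynomial σ ℂ :=
  ∑ b ∈ F.support, (F.coeff b * ∏ i ∈ a.support, ((b i).descFactorial (a i) : ℂ)) •
    monomial (b - a) (1 : ℂ)

/-- the apolarity action: `apolar F ψ = ψ ∘ F` is the result of letting `ψ` act on `F`
by differentiation, linearly in `ψ`. -/
def apolar {σ : Type*} (F : MvPolynomial σ ℂ) : MvPolynomial σ ℂ →ₗ[ℂ] MvPolynomial σ ℂ :=
  Finsupp.lsum ℂ (fun a : σ →₀ ℕ => LinearMap.toSpanSingleton ℂ _ (diffMon a F)) ∘ₗ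
    (AddMonoidAlgebra.coeffLinearEquiv ℂ).toLinearMap

/-- the apolar (annihilator) ideal `Ann(F) = {ψ : ψ ∘ F = 0}`, as a subspace. -/
def ann {σ : Type*} (F : MvPolynomial σ ℂ) : Submodule ℂ (MvPolynomial σ ℂ) :=
  LinearMap.ker (apolar F)

/-- the ideal `I_R ⊆ S` generated by the `2×2` minors
`α_{i,j} α_{k,ℓ} − α_{i,ℓ} α_{k,j}`, `i < k`, `j < ℓ`. -/
def IR (n d : ℕ) : Ideal (MvPolynomial (Fin d × Fin n) ℂ) :=
  Ideal.span {q | ∃ i k : Fin d, ∃ j l : Fin n, i < k ∧ j < l ∧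
    q = X (i, j) * X (k, l) - X (i, l) * X (k, j)}

/-- `J ⊆ S` is a (multigraded) homogeneous ideal: it is the sum of its
multigraded components. -/
def IsHomogS (n d : ℕ) (J : Ideal (MvPolynomial (Fin d × Fin n) ℂ)) : Prop :=
  Submodule.restrictScalars ℂ J = ⨆ u : Fin d → ℕ, (Submodule.restrictScalars ℂ J ⊓ Scomp n d u)

/-- `I ⊆ V` is a homogeneous ideal: it is the sum of its graded components. -/
def IsHomogV (n : ℕ) (I : Ideal (MvPolynomial (Fin n) ℂ)) : Prop :=
  Submodule.restrictScalars ℂ I = ⨆ N : ℕ, (Submodule.restrictScalars ℂ I ⊓ Vcomp n N)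

/-- the exponent redistribution underlying `ψ_u`: in the sorted list
`i_1 ≤ ⋯ ≤ i_N` of the indices of the monomial `β^γ` (value `j` occurring `γ j`
times, `N = |γ|`), row `i` receives the block of positions
`[∑_{i'<i} u i', ∑_{i'≤i} u i')`, while value `j` occupies positions
`[∑_{j'<j} γ j', ∑_{j'≤j} γ j')`; hence the exponent of `α_{i,j}` is the size of
the intersection of these two intervals. -/
def distrib (n d : ℕ) (u : Fin d → ℕ) (γ : Fin n →₀ ℕ) : (Fin d × Fin n) →₀ ℕ :=
  Finsupp.equivFunOnFinite.symm fun p : Fin d × Fin n =>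
    min (∑ i ∈ Finset.univ.filter fun i : Fin d => (i : ℕ) ≤ (p.1 : ℕ), u i)
        (∑ j ∈ Finset.univ.filter fun j : Fin n => (j : ℕ) ≤ (p.2 : ℕ), γ j)
    - max (∑ i ∈ Finset.univ.filter fun i : Fin d => (i : ℕ) < (p.1 : ℕ), u i)
          (∑ j ∈ Finset.univ.filter fun j : Fin n => (j : ℕ) < (p.2 : ℕ), γ j)

/-- the linear map `ψ_u : V → S` sending a monomial `β_{i_1} β_{i_2} ⋯ β_{i_N}`
with `i_1 ≤ i_2 ≤ ⋯ ≤ i_N` to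
`(α_{1,i_1} ⋯ α_{1,i_{u_1}}) (α_{2,i_{u_1+1}} ⋯ α_{2,i_{u_1+u_2}}) ⋯`.
(Its restriction to `Vcomp n (∑ i, u i)` is the map `ψ_u : V_{|u|} → S_u` of the
paper.) -/
def psi (n d : ℕ) (u : Fin d → ℕ) :
    MvPolynomial (Fin n) ℂ →ₗ[ℂ] MvPolynomial (Fin d × Fin n) ℂ :=
  AddMonoidAlgebra.mapDomainLinearMap ℂ ℂ (distrib n d u)

/-- `Υ(I) = I_R + ∑_{u} ψ_u(I_{|u|}) ⊆ S`. -/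
def Upsilon (n d : ℕ) (I : Ideal (MvPolynomial (Fin n) ℂ)) :
    Submodule ℂ (MvPolynomial (Fin d × Fin n) ℂ) :=
  restrictScalars ℂ (IR n d) ⊔
    ⨆ u : Fin d → ℕ, Submodule.map (psi n d u) (restrictScalars ℂ I ⊓ Vcomp n (∑ i, u i))

/-- the irrelevant ideal `B_X = ∏_{i=1}^d (α_{i,1},…,α_{i,n}) ⊆ S`. -/
def BX (n d : ℕ) : Ideal (MvPolynomial (Fin d × Fin n) ℂ) :=
  ∏ i : Fin d, Ideal.span (Set.range fun j : Fin n => X (i, j))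

/-- the irrelevant ideal `B_Y = (β_1,…,β_n) ⊆ V`. -/
def BY (n : ℕ) : Ideal (MvPolynomial (Fin n) ℂ) :=
  Ideal.span (Set.range X)

/-- `Σ(J) = ⊕_{a ≥ 0} ⊕_{s ∈ ℰ} π(J_{a𝟏+s}) ⊆ V`, where
`ℰ = {0, e_1, e_1+e_2, …, e_1+⋯+e_{d-1}}` (the element `s` with `m` ones is
`fun i => if i < m then 1 else 0`). -/
def SigmaMap (n d : ℕ) (J : Ideal (MvPolynomial (Fin d × Fin n) ℂ)) :
    Submodule ℂ (MvPolynomial (Fin n) ℂ) :=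
  ⨆ a : ℕ, ⨆ m : Fin d, Submodule.map (piL n d)
    (restrictScalars ℂ J ⊓ Scomp n d (fun i => a + if (i : ℕ) < (m : ℕ) then 1 else 0))

/-- the set of tensors of rank at most `r`: sums of `r` decomposable tensors
`v_1 ⊗ ⋯ ⊗ v_d = ∏_i (∑_j v_i(j) x_{i,j})`. -/
def rankLE (n d r : ℕ) : Set (MvPolynomial (Fin d × Fin n) ℂ) :=
  {F | ∃ v : Fin r → Fin d → Fin n → ℂ,
    F = ∑ s : Fin r, ∏ i : Fin d, ∑ j : Fin n, C (v s i j) * X (i, j)}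

/-- `F` has border rank at most `r`: coefficientwise (finitely many coefficients are
involved), `F` lies in the closure of the set of tensors of rank at most `r`. -/
def brkLE (n d : ℕ) (F : MvPolynomial (Fin d × Fin n) ℂ) (r : ℕ) : Prop :=
  (fun m => coeff m F) ∈ closure ((fun G => fun m => coeff m G) '' rankLE n d r)

/-- the border rank of a tensor. -/
def brk (n d : ℕ) (F : MvPolynomial (Fin d × Fin n) ℂ) : ℕ :=
  sInf {r | brkLE n d F r}

/-- polynomials that are sums of `r` `d`-th powers of linear forms. -/
def srankLE (n d r : ℕ) : Set (MvPolynomial (Fin n) ℂ) :=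
  {p | ∃ c : Fin r → Fin n → ℂ, p = ∑ s : Fin r, (∑ j : Fin n, C (c s j) * X j) ^ d}

/-- `p` has symmetric border rank at most `r`. -/
def sbrkLE (n d : ℕ) (p : MvPolynomial (Fin n) ℂ) (r : ℕ) : Prop :=
  (fun m => coeff m p) ∈ closure ((fun q => fun m => coeff m q) '' srankLE n d r)

/-- the symmetric border rank of a degree-`d` form. -/
def sbrk (n d : ℕ) (p : MvPolynomial (Fin n) ℂ) : ℕ :=
  sInf {r | sbrkLE n d p r}

/-- `F` is a symmetric tensor: invariant under the permutations of the `d` factors. -/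
def IsSymm (n d : ℕ) (F : MvPolynomial (Fin d × Fin n) ℂ) : Prop :=
  ∀ τ : Equiv.Perm (Fin d), rename (Prod.map τ id) F = F

/-- the degree-`d` polynomial `p_F` corresponding to a symmetric tensor `F`, obtained
by identifying all the rows of variables (`x_{i,j} ↦ y_j`); `F` is the polarization
of `p_F`. -/
def pF (n d : ℕ) (F : MvPolynomial (Fin d × Fin n) ℂ) : MvPolynomial (Fin n) ℂ :=
  rename Prod.snd F

/-- `F` is concise: the contraction `(ℂ^n)^* → (ℂ^n)^{⊗(d-1)}` of the first tensor
factor, `w ↦ F(x_{1,j} := w_j)`, is injective. -/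
def Concise (n d : ℕ) (F : MvPolynomial (Fin d × Fin n) ℂ) : Prop :=
  Function.Injective fun w : Fin n → ℂ =>
    aeval (fun p : Fin d × Fin n => if (p.1 : ℕ) = 0 then C (w p.2) else X p) F

/-- the ideal `∑_{0<u<𝟏} S·Ann(F)_u` generated by the components `Ann(F)_u`,
`0 < u < 𝟏` (componentwise). -/
def midIdeal (n d : ℕ) (F : MvPolynomial (Fin d × Fin n) ℂ) :
    Ideal (MvPolynomial (Fin d × Fin n) ℂ) :=
  Ideal.span (⋃ u ∈ {u : Fin d → ℕ | 0 < u ∧ u < fun _ => 1},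
    ((ann F ⊓ Scomp n d u : Submodule ℂ (MvPolynomial (Fin d × Fin n) ℂ)) :
      Set (MvPolynomial (Fin d × Fin n) ℂ)))

/-- `F` is a *sharp* tensor:
(1) `Ann(F)` has exactly `n-1` minimal generators of multidegree `𝟏`;
(2) `dim (S/Ann F)_u = n` for all `0 < u < 𝟏`;
(3) `dim (S/(Ann(F)_{e_i+e_j}))_{s e_i + e_j} = n` for all `i ≠ j`, `1 ≤ s ≤ d-1`. -/
def Sharp (n d : ℕ) (F : MvPolynomial (Fin d × Fin n) ℂ) : Prop :=
  (finrank ℂ (ann F ⊓ Scomp n d fun _ => 1 :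
        Submodule ℂ (MvPolynomial (Fin d × Fin n) ℂ)) -
      finrank ℂ (restrictScalars ℂ (midIdeal n d F) ⊓ Scomp n d fun _ => 1 :
        Submodule ℂ (MvPolynomial (Fin d × Fin n) ℂ)) = n - 1) ∧
  (∀ u : Fin d → ℕ, 0 < u → u < (fun _ => 1) →
    finrank ℂ (Scomp n d u ⧸ Submodule.comap (Scomp n d u).subtype (ann F)) = n) ∧
  (∀ i j : Fin d, i ≠ j → ∀ s : ℕ, 1 ≤ s → s ≤ d - 1 →
    finrank ℂ (Scomp n d (Pi.single i s + Pi.single j 1) ⧸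
      Submodule.comap (Scomp n d (Pi.single i s + Pi.single j 1)).subtype
        (restrictScalars ℂ (Ideal.span
          ((ann F ⊓ Scomp n d (Pi.single i 1 + Pi.single j 1) :
            Submodule ℂ (MvPolynomial (Fin d × Fin n) ℂ)) :
            Set (MvPolynomial (Fin d × Fin n) ℂ))))) = n)

/-!
Write `c_g` for the coefficient of `∏_i α_{i, g i}` in `F` (`g : Fin d → Fin n`), so that
symmetry reads `c_{g ∘ τ} = c_g` and `p_F = ∑_g c_g ∏_i β_{g i}`. Fix a row `r` and a monomial
`ψ = ∏_{i ≠ r} α_{i, k i}`. Differentiating `F` by `ψ` leaves `∑_l c_{k[r ↦ l]} x_{r,l}`.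
Differentiating `p_F` by `π ψ` leaves, in front of `y_l`, the sum of the `c_g` over the `g` with
the same multiset of values `μ` as `k[r ↦ l]`, times `∏_j μ_j!`. These `g` are exactly the
`k[r ↦ l] ∘ τ`, each reached by `∏_j μ_j!` permutations `τ`, so the coefficient is
`d! c_{k[r ↦ l]}`. Hence `π ψ ∘ p_F` is `d!` times `ψ ∘ F` with `x_{r,l}` renamed to `y_l`, so
`ψ ∘ F = 0 ↔ π ψ ∘ p_F = 0` on `S_{𝟏 - e_r}`; and `π` maps `S_{𝟏 - e_r}` onto `V_{d-1}`.
-/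

open Finset
open scoped Nat

section Apolarity

variable {σ : Type*}

theorem coeff_diffMon (a m : σ →₀ ℕ) (F : MvPolynomial σ ℂ) :
    coeff m (diffMon a F) =
      coeff (m + a) F * ∏ i ∈ a.support, (((m + a) i).descFactorial (a i) : ℂ) := by
  classical
  simp only [diffMon, coeff_sum, coeff_smul, coeff_monomial, smul_eq_mul, mul_ite, mul_one,
    mul_zero]
  rw [Finset.sum_eq_single (m + a)]
  · simp
  · intro b _ hb
    split_ifs with hba
    · obtain ⟨i, hi⟩ : ∃ i, b i < a i := by
        by_contra! hle
        exact hb (by rw [← hba, tsub_add_cancel_of_le fun i => hle i])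
      rw [Finset.prod_eq_zero (i := i) (by simp; omega)
        (by rw [Nat.cast_eq_zero, Nat.descFactorial_eq_zero_iff_lt.mpr hi]), mul_zero]
    · rfl
  · intro h
    rw [notMem_support_iff.mp h, zero_mul]
    simp

theorem apolar_monomial (F : MvPolynomial σ ℂ) (a : σ →₀ ℕ) (c : ℂ) :
    apolar F (monomial a c) = c • diffMon a F := by
  simp [apolar, ← single_eq_monomial]

end Apolarity

section Counting

variable {α ι : Type*} [Fintype α] [DecidableEq ι]

theorem exists_perm_comp_eq {h g : α → ι}
    (hc : ∀ j, Fintype.card {t // h t = j} = Fintype.card {t // g t = j}) :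
    ∃ σ : Equiv.Perm α, h ∘ σ = g := by
  have e (j : ι) : {t // g t = j} ≃ {t // h t = j} := Fintype.equivOfCardEq (hc j).symm
  refine ⟨(Equiv.sigmaFiberEquiv g).symm.trans
    ((Equiv.sigmaCongrRight e).trans (Equiv.sigmaFiberEquiv h)), funext fun t => ?_⟩
  exact (e (g t) ⟨t, rfl⟩).2

theorem card_perm_comp_eq [DecidableEq α] [Fintype ι] {h g : α → ι}
    (hc : ∀ j, Fintype.card {t // h t = j} = Fintype.card {t // g t = j}) :
    Fintype.card {σ : Equiv.Perm α // h ∘ σ = g} = ∏ j, (Fintype.card {t // g t = j})! := by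
  obtain ⟨σ₀, rfl⟩ := exists_perm_comp_eq hc
  rw [← DomMulAct.stabilizer_card]
  refine Fintype.card_congr (Equiv.subtypeEquiv (Equiv.mulLeft σ₀⁻¹) fun σ => ?_)
  rw [Equiv.coe_mulLeft, Equiv.Perm.coe_mul, Equiv.Perm.coe_inv, Function.comp_assoc,
    ← Function.comp_assoc σ₀, Equiv.self_comp_symm, Function.id_comp]

theorem prod_descFactorial_single_add [Fintype ι] (γ : ι →₀ ℕ) (l : ι) :
    ∏ j ∈ γ.support, ((Finsupp.single l 1 + γ : ι →₀ ℕ) j).descFactorial (γ j) =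
      ∏ j, ((Finsupp.single l 1 + γ : ι →₀ ℕ) j)! := by
  rw [Finset.prod_subset (subset_univ _) fun j _ hj => by
    rw [Finsupp.notMem_support_iff.mp hj, Nat.descFactorial_zero]]
  refine prod_congr rfl fun j _ => ?_
  have h := Nat.factorial_mul_descFactorial (Nat.le_add_left (γ j) (Finsupp.single l 1 j))
  rw [Finsupp.add_apply, add_tsub_cancel_right] at *
  rw [← h, Finsupp.single_apply]
  split_ifs <;> simp

end Counting

section Graphs

variable {n d : ℕ}

def graphExp (A : Finset (Fin d)) (k : Fin d → Fin n) : Fin d × Fin n →₀ ℕ :=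
  ∑ i ∈ A, Finsupp.single (i, k i) 1

def valueCount (A : Finset (Fin d)) (k : Fin d → Fin n) : Fin n →₀ ℕ :=
  ∑ i ∈ A, Finsupp.single (k i) 1

theorem graphExp_apply (A : Finset (Fin d)) (k : Fin d → Fin n) (p : Fin d × Fin n) :
    graphExp A k p = if p.1 ∈ A ∧ k p.1 = p.2 then 1 else 0 := by
  obtain ⟨i, j⟩ := p
  simp only [graphExp, Finsupp.coe_finsetSum, Finset.sum_apply, Finsupp.single_apply,
    Prod.ext_iff, ite_and]
  rw [Finset.sum_ite_eq']

theorem valueCount_apply (A : Finset (Fin d)) (k : Fin d → Fin n) (j : Fin n) :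
    valueCount A k j = #{i ∈ A | k i = j} := by
  simp only [valueCount, Finsupp.coe_finsetSum, Finset.sum_apply, Finsupp.single_apply]
  rw [Finset.sum_boole, Nat.cast_id]

theorem degree_valueCount (A : Finset (Fin d)) (k : Fin d → Fin n) :
    (valueCount A k).degree = #A := by
  simp [valueCount]

theorem graphExp_univ_injective :
    Function.Injective (graphExp univ : (Fin d → Fin n) → Fin d × Fin n →₀ ℕ) := by
  intro k k' h
  funext i
  have := DFunLike.congr_fun h (i, k i)
  simp only [graphExp_apply, mem_univ, true_and, if_true] at this
  split_ifs at this with hk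
  exact hk.symm

theorem weight_graphExp (A : Finset (Fin d)) (k : Fin d → Fin n) :
    Finsupp.weight (fun p : Fin d × Fin n => (Pi.single p.1 1 : Fin d → ℕ)) (graphExp A k) =
      fun i => if i ∈ A then 1 else 0 := by
  ext i
  simp [graphExp, Finsupp.weight_single, Pi.single_apply]

theorem graphExp_erase_add {A : Finset (Fin d)} {r : Fin d} (hr : r ∈ A) (k : Fin d → Fin n)
    (l : Fin n) :
    Finsupp.single (r, l) 1 + graphExp (A.erase r) k = graphExp A (Function.update k r l) := by
  rw [graphExp, graphExp, ← Finset.add_sum_erase _ _ hr, Function.update_self]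
  congr 1
  refine Finset.sum_congr rfl fun i hi => ?_
  rw [Function.update_of_ne (Finset.ne_of_mem_erase hi)]

theorem valueCount_erase_add {A : Finset (Fin d)} {r : Fin d} (hr : r ∈ A) (k : Fin d → Fin n)
    (l : Fin n) :
    Finsupp.single l 1 + valueCount (A.erase r) k = valueCount A (Function.update k r l) := by
  rw [valueCount, valueCount, ← Finset.add_sum_erase _ _ hr, Function.update_self]
  congr 1
  refine Finset.sum_congr rfl fun i hi => ?_
  rw [Function.update_of_ne (Finset.ne_of_mem_erase hi)]

theorem mapDomain_snd_graphExp (A : Finset (Fin d)) (k : Fin d → Fin n) :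
    Finsupp.mapDomain Prod.snd (graphExp A k) = valueCount A k := by
  simp [graphExp, valueCount, Finsupp.mapDomain_finsetSum]

theorem piL_apply (ψ : MvPolynomial (Fin d × Fin n) ℂ) : piL n d ψ = rename Prod.snd ψ := by
  rw [piL, AlgHom.toLinearMap_apply, rename_eq_aeval]
  rfl

theorem piL_monomial_graphExp (A : Finset (Fin d)) (k : Fin d → Fin n) (c : ℂ) :
    piL n d (monomial (graphExp A k) c) = monomial (valueCount A k) c := by
  rw [piL_apply, rename_monomial, mapDomain_snd_graphExp]

theorem valueCount_comp_perm (g : Fin d → Fin n) (τ : Equiv.Perm (Fin d)) :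
    valueCount univ (g ∘ τ) = valueCount univ g :=
  Equiv.sum_comp τ fun i => Finsupp.single (g i) 1

theorem card_fiber_eq_valueCount (g : Fin d → Fin n) (j : Fin n) :
    Fintype.card {t // g t = j} = valueCount univ g j := by
  rw [Fintype.card_subtype, valueCount_apply]

theorem card_perm_comp_eq_valueCount (h g : Fin d → Fin n) :
    #{τ : Equiv.Perm (Fin d) | h ∘ τ = g} =
      if valueCount univ g = valueCount univ h then ∏ j, (valueCount univ h j)! else 0 := by
  rw [← Fintype.card_subtype]
  split_ifs with hg
  · rw [card_perm_comp_eq fun j => by rw [card_fiber_eq_valueCount, card_fiber_eq_valueCount, hg]]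
    simp only [card_fiber_eq_valueCount, hg]
  · refine Fintype.card_eq_zero_iff.mpr ⟨fun ⟨τ, hτ⟩ => hg ?_⟩
    rw [← hτ, valueCount_comp_perm]

theorem weight_apply_eq_sum_row (m : Fin d × Fin n →₀ ℕ) (i : Fin d) :
    Finsupp.weight (fun p : Fin d × Fin n => (Pi.single p.1 1 : Fin d → ℕ)) m i =
      ∑ j, m (i, j) := by
  rw [Finsupp.weight_apply, Finsupp.sum_fintype _ _ (by simp), Finset.sum_apply,
    Fintype.sum_prod_type]
  simp [Pi.single_apply]

theorem exists_eq_graphExp {A : Finset (Fin d)} (hA : A.Nonempty) {m : Fin d × Fin n →₀ ℕ}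
    (hm : Finsupp.weight (fun p : Fin d × Fin n => (Pi.single p.1 1 : Fin d → ℕ)) m =
      fun i => if i ∈ A then 1 else 0) :
    ∃ k, m = graphExp A k := by
  have hrow (i : Fin d) : ∑ j, m (i, j) = if i ∈ A then 1 else 0 := by
    rw [← weight_apply_eq_sum_row, hm]
  have hsingle : ∀ i ∈ A, ∃ j, ∀ j', m (i, j') = if j = j' then 1 else 0 := by
    intro i hi
    obtain ⟨j, hj⟩ : Finsupp.equivFunOnFinite.symm (fun j => m (i, j)) ∈
        Set.range fun j => Finsupp.single j 1 := by
      rw [Finsupp.range_single_one, Set.mem_ofPred_eq, Finsupp.degree_eq_sum]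
      simpa [hi] using hrow i
    exact ⟨j, fun j' => by simpa [Finsupp.single_apply] using (DFunLike.congr_fun hj j').symm⟩
  obtain ⟨i₀, hi₀⟩ := hA
  have : Nonempty (Fin n) := ⟨(hsingle i₀ hi₀).choose⟩
  choose! k hk using hsingle
  refine ⟨k, Finsupp.ext fun ⟨i, j⟩ => ?_⟩
  rw [graphExp_apply]
  by_cases hi : i ∈ A
  · simp [hk i hi j, hi]
  · simpa [hi] using (Finset.sum_eq_zero_iff.mp ((hrow i).trans (if_neg hi))) j (mem_univ j)

theorem exists_valueCount_eq [NeZero n] (A : Finset (Fin d)) (γ : Fin n →₀ ℕ)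
    (hγ : γ.degree = #A) : ∃ k, valueCount A k = γ := by
  induction A using Finset.induction_on generalizing γ with
  | empty =>
    refine ⟨fun _ => 0, ?_⟩
    rw [card_empty, Finsupp.degree_eq_zero_iff] at hγ
    simp [valueCount, hγ]
  | insert a s ha ih =>
    obtain ⟨j, hj⟩ : γ.support.Nonempty := by
      rw [Finsupp.support_nonempty_iff]
      rintro rfl
      simp [card_insert_of_notMem ha] at hγ
    have hle : Finsupp.single j 1 ≤ γ :=
      Finsupp.single_le_iff.mpr (Nat.one_le_iff_ne_zero.mpr (Finsupp.mem_support_iff.mp hj))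
    obtain ⟨k, hk⟩ := ih (γ - Finsupp.single j 1) (by
      have := congrArg Finsupp.degree (add_tsub_cancel_of_le hle)
      rw [map_add, Finsupp.degree_single, hγ, card_insert_of_notMem ha] at this
      omega)
    refine ⟨Function.update k a j, ?_⟩
    rw [← valueCount_erase_add (mem_insert_self a s), erase_insert ha, hk,
      add_tsub_cancel_of_le hle]

theorem Scomp_indicator_eq_span {A : Finset (Fin d)} (hA : A.Nonempty) :
    Scomp n d (fun i => if i ∈ A then 1 else 0) =
      span ℂ (Set.range fun k => monomial (graphExp A k) (1 : ℂ)) := by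
  rw [Scomp, weightedHomogeneousSubmodule_eq_finsupp_supported,
    AddMonoidAlgebra.supported_eq_span_single]
  congr 1
  ext ψ
  constructor
  · rintro ⟨m, hm, rfl⟩
    obtain ⟨k, rfl⟩ := exists_eq_graphExp hA hm
    exact ⟨k, rfl⟩
  · rintro ⟨k, rfl⟩
    exact ⟨graphExp A k, weight_graphExp A k, rfl⟩

theorem map_piL_Scomp_indicator {A : Finset (Fin d)} (hA : A.Nonempty) :
    map (piL n d) (Scomp n d fun i => if i ∈ A then 1 else 0) = Vcomp n #A := by
  rw [Scomp_indicator_eq_span hA, map_span, Vcomp, homogeneousSubmodule_eq_finsupp_supported,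
    AddMonoidAlgebra.supported_eq_span_single]
  congr 1
  ext q
  constructor
  · rintro ⟨_, ⟨k, rfl⟩, rfl⟩
    exact ⟨valueCount A k, degree_valueCount A k, (piL_monomial_graphExp A k 1).symm⟩
  · rintro ⟨γ, hγ, rfl⟩
    obtain ⟨j, -⟩ : γ.support.Nonempty := by
      rw [Finsupp.support_nonempty_iff]
      rintro rfl
      exact hA.card_pos.ne (by simpa using hγ)
    have := NeZero.of_pos j.pos
    obtain ⟨k, rfl⟩ := exists_valueCount_eq A γ hγ
    exact ⟨_, ⟨k, rfl⟩, piL_monomial_graphExp A k 1⟩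

end Graphs

section SymmetricTensor

variable {n d : ℕ} {F : MvPolynomial (Fin d × Fin n) ℂ}

theorem eq_sum_graphExp [NeZero d] (hF : F ∈ Scomp n d fun _ => 1) :
    F = ∑ g, coeff (graphExp univ g) F • monomial (graphExp univ g) (1 : ℂ) := by
  ext m
  simp only [coeff_sum, coeff_smul, coeff_monomial, smul_eq_mul, mul_ite, mul_one, mul_zero]
  by_cases hm : coeff m F = 0
  · rw [hm]
    exact (Finset.sum_eq_zero fun g _ => by split_ifs with h <;> simp [h, hm]).symm
  · obtain ⟨g, rfl⟩ := exists_eq_graphExp univ_nonempty (A := univ)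
      (by simpa using (mem_weightedHomogeneousSubmodule ℂ _ _ F).mp hF hm)
    rw [Finset.sum_eq_single g (fun g' _ hg' => if_neg (graphExp_univ_injective.ne hg'))
      (by simp), if_pos rfl]

theorem coeff_pF [NeZero d] (hF : F ∈ Scomp n d fun _ => 1) (μ : Fin n →₀ ℕ) :
    coeff μ (pF n d F) = ∑ g with valueCount univ g = μ, coeff (graphExp univ g) F := by
  conv_lhs => rw [pF, eq_sum_graphExp hF]
  simp [coeff_sum, rename_monomial, mapDomain_snd_graphExp, coeff_monomial, Finset.sum_filter]

theorem coeff_graphExp_comp_perm (hsym : IsSymm n d F) (g : Fin d → Fin n)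
    (τ : Equiv.Perm (Fin d)) :
    coeff (graphExp univ (g ∘ τ)) F = coeff (graphExp univ g) F := by
  have hinj : Function.Injective (Prod.map τ id : Fin d × Fin n → Fin d × Fin n) :=
    τ.injective.prodMap Function.injective_id
  have hmap : Finsupp.mapDomain (Prod.map τ id) (graphExp univ (g ∘ τ)) = graphExp univ g := by
    simp only [graphExp, Finsupp.mapDomain_finsetSum, Finsupp.mapDomain_single]
    exact Equiv.sum_comp τ fun i => Finsupp.single (i, g i) 1
  rw [← coeff_rename_mapDomain _ hinj, hmap, hsym τ]

theorem sum_coeff_graphExp_mul_prod_factorial (hsym : IsSymm n d F) (h : Fin d → Fin n) :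
    (∑ g with valueCount univ g = valueCount univ h, coeff (graphExp univ g) F) *
        ∏ j, ((valueCount univ h j)! : ℂ) =
      d ! * coeff (graphExp univ h) F := by
  calc _ = ∑ g, (#{τ : Equiv.Perm (Fin d) | h ∘ τ = g} : ℂ) * coeff (graphExp univ g) F := by
        rw [Finset.sum_mul, Finset.sum_filter]
        refine Finset.sum_congr rfl fun g _ => ?_
        rw [card_perm_comp_eq_valueCount]
        split_ifs <;> simp [mul_comm]
    _ = ∑ τ : Equiv.Perm (Fin d), coeff (graphExp univ (h ∘ τ)) F := by
        rw [← Finset.sum_fiberwise' univ (fun τ : Equiv.Perm (Fin d) => h ∘ τ)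
          fun g => coeff (graphExp univ g) F]
        simp
    _ = d ! * coeff (graphExp univ h) F := by
        simp [coeff_graphExp_comp_perm hsym, Fintype.card_perm]

/-- The linear form `F(e_{k 0}, …, e_{k (r-1)}, -, e_{k (r+1)}, …)` in the variables `y_j`. -/
def sliceForm (F : MvPolynomial (Fin d × Fin n) ℂ) (r : Fin d) (k : Fin d → Fin n) :
    MvPolynomial (Fin n) ℂ :=
  ∑ l, coeff (graphExp univ (Function.update k r l)) F • X l

theorem diffMon_graphExp_erase (hF : F ∈ Scomp n d fun _ => 1) (r : Fin d)
    (k : Fin d → Fin n) :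
    diffMon (graphExp (univ.erase r) k) F = rename (fun j => (r, j)) (sliceForm F r k) := by
  ext m
  simp only [coeff_diffMon, sliceForm, map_sum, map_smul, rename_X, coeff_sum, coeff_smul,
    coeff_X, smul_eq_mul, mul_ite, mul_one, mul_zero]
  by_cases hm : ∃ l, m = Finsupp.single (r, l) 1
  · obtain ⟨l, rfl⟩ := hm
    rw [graphExp_erase_add (mem_univ r), Finset.sum_eq_single l (fun l' _ hl' => if_neg ?_)
      (by simp), if_pos rfl, Finset.prod_eq_one, mul_one]
    · intro p hp
      rw [Finsupp.mem_support_iff, graphExp_apply] at hp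
      obtain ⟨hpA, hpk⟩ : p.1 ∈ univ.erase r ∧ k p.1 = p.2 := by
        by_contra h
        exact hp (if_neg h)
      rw [graphExp_apply, graphExp_apply, if_pos ⟨mem_univ _, by
        rw [Function.update_of_ne (ne_of_mem_erase hpA), hpk]⟩, if_pos ⟨hpA, hpk⟩]
      simp
    · exact (Finsupp.single_left_injective one_ne_zero).ne (by simpa using hl')
  · rw [Finset.sum_eq_zero fun l _ => if_neg fun h => hm ⟨l, h.symm⟩]
    -- `m + graphExp (univ.erase r) k` of weight `𝟏` forces `m` to be some `x_{r,l}`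
    refine mul_eq_zero_of_left (by_contra fun hc => hm ?_) _
    have hw := (mem_weightedHomogeneousSubmodule ℂ _ _ F).mp hF hc
    rw [map_add, weight_graphExp] at hw
    obtain ⟨k', rfl⟩ := exists_eq_graphExp (singleton_nonempty r) (m := m) (funext fun i => by
      have := congr_fun hw i
      by_cases hi : i = r <;> simp_all)
    exact ⟨k' r, by simp [graphExp]⟩

theorem diffMon_valueCount_erase (hF : F ∈ Scomp n d fun _ => 1) (hsym : IsSymm n d F)
    (r : Fin d) (k : Fin d → Fin n) :
    diffMon (valueCount (univ.erase r) k) (pF n d F) = (d ! : ℂ) • sliceForm F r k := by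
  have := NeZero.of_pos r.pos
  ext m
  simp only [coeff_diffMon, sliceForm, coeff_smul, coeff_sum, coeff_smul, coeff_X, smul_eq_mul,
    mul_ite, mul_one, mul_zero]
  by_cases hm : ∃ l, m = Finsupp.single l 1
  · obtain ⟨l, rfl⟩ := hm
    rw [← Nat.cast_prod, prod_descFactorial_single_add, Nat.cast_prod,
      valueCount_erase_add (mem_univ r), coeff_pF hF, sum_coeff_graphExp_mul_prod_factorial hsym,
      Finset.sum_eq_single l (fun l' _ hl' => if_neg ?_) (by simp), if_pos rfl]
    exact (Finsupp.single_left_injective one_ne_zero).ne hl'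
  · rw [Finset.sum_eq_zero fun l _ => if_neg fun h => hm ⟨l, h.symm⟩, mul_zero, coeff_pF hF]
    refine mul_eq_zero_of_left (Finset.sum_eq_zero fun g hg => absurd ?_ hm) _
    have hdeg := congrArg Finsupp.degree (Finset.mem_filter.mp hg).2
    rw [map_add, degree_valueCount, degree_valueCount, card_erase_of_mem (mem_univ r),
      card_univ, Fintype.card_fin] at hdeg
    obtain ⟨l, rfl⟩ : m ∈ Set.range fun l => Finsupp.single l 1 := by
      rw [Finsupp.range_single_one]
      have := r.pos
      exact (by omega : m.degree = 1)
    exact ⟨l, rfl⟩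

theorem rename_apolar_pF_piL (hF : F ∈ Scomp n d fun _ => 1) (hsym : IsSymm n d F)
    {r : Fin d} (hr : (univ.erase r).Nonempty) {ψ : MvPolynomial (Fin d × Fin n) ℂ}
    (hψ : ψ ∈ Scomp n d fun i => if i ∈ univ.erase r then 1 else 0) :
    rename (fun j => (r, j)) (apolar (pF n d F) (piL n d ψ)) = (d ! : ℂ) • apolar F ψ := by
  rw [Scomp_indicator_eq_span hr] at hψ
  refine LinearMap.eqOn_span'
    (f := (rename fun j => (r, j)).toLinearMap ∘ₗ apolar (pF n d F) ∘ₗ piL n d)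
    (g := (d ! : ℂ) • apolar F) ?_ hψ
  rintro _ ⟨k, rfl⟩
  simp [piL_monomial_graphExp, apolar_monomial, diffMon_valueCount_erase hF hsym,
    diffMon_graphExp_erase hF]

theorem mem_ann_iff_piL_mem_ann (hF : F ∈ Scomp n d fun _ => 1) (hsym : IsSymm n d F)
    {r : Fin d} (hr : (univ.erase r).Nonempty) {ψ : MvPolynomial (Fin d × Fin n) ℂ}
    (hψ : ψ ∈ Scomp n d fun i => if i ∈ univ.erase r then 1 else 0) :
    ψ ∈ ann F ↔ piL n d ψ ∈ ann (pF n d F) := by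
  have hinj : Function.Injective (rename fun j : Fin n => (r, j) :
      MvPolynomial (Fin n) ℂ → MvPolynomial (Fin d × Fin n) ℂ) :=
    rename_injective _ fun _ _ h => (Prod.mk.inj h).2
  rw [ann, ann, LinearMap.mem_ker, LinearMap.mem_ker]
  calc apolar F ψ = 0 ↔ (d ! : ℂ) • apolar F ψ = 0 :=
        (smul_eq_zero_iff_right (Nat.cast_ne_zero.mpr d.factorial_ne_zero)).symm
    _ ↔ rename (fun j => (r, j)) (apolar (pF n d F) (piL n d ψ)) = 0 := by
        rw [rename_apolar_pF_piL hF hsym hr hψ]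
    _ ↔ apolar (pF n d F) (piL n d ψ) = 0 := map_eq_zero_iff _ hinj

end SymmetricTensor

theorem stmt_13_general (n d : ℕ) (hd : 3 ≤ d)
    (F : MvPolynomial (Fin d × Fin n) ℂ)
    (hF : F ∈ Scomp n d fun _ => 1) (hsym : IsSymm n d F) :
    Submodule.map (piL n d)
        (ann F ⊓ Scomp n d fun i => if (i : ℕ) = d - 1 then 0 else 1) =
      ann (pF n d F) ⊓ Vcomp n (d - 1) := by
  set r : Fin d := ⟨d - 1, by omega⟩
  have hr : (univ.erase r).Nonempty := ⟨⟨0, by omega⟩, by simp [r, Fin.ext_iff]; omega⟩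
  have hu : (fun i : Fin d => if (i : ℕ) = d - 1 then 0 else 1) =
      fun i => if i ∈ univ.erase r then 1 else 0 := by
    funext i
    simp [r, Fin.ext_iff]
  have hann : ann F ⊓ Scomp n d (fun i => if i ∈ univ.erase r then 1 else 0) =
      Scomp n d (fun i => if i ∈ univ.erase r then 1 else 0) ⊓
        comap (piL n d) (ann (pF n d F)) := by
    ext ψ
    simp only [Submodule.mem_inf, mem_comap]
    exact ⟨fun ⟨hψF, hψ⟩ => ⟨hψ, (mem_ann_iff_piL_mem_ann hF hsym hr hψ).1 hψF⟩,
      fun ⟨hψ, hψp⟩ => ⟨(mem_ann_iff_piL_mem_ann hF hsym hr hψ).2 hψp, hψ⟩⟩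
  rw [hu, hann, ← map_inf_eq_map_inf_comap, map_piL_Scomp_indicator hr,
    card_erase_of_mem (mem_univ r), card_univ, Fintype.card_fin, inf_comm]

/-- Corollary 5.10: if `F` is a sharp concise symmetric tensor of
minimal border rank, then `π(Ann(F)_{𝟏−e_d}) = Ann(p_F)_{d−1}`. -/
theorem stmt_13 (n d : ℕ) (hd : 3 ≤ d)
    (F : MvPolynomial (Fin d × Fin n) ℂ)
    (hF : F ∈ Scomp n d fun _ => 1) (hsym : IsSymm n d F) (hconc : Concise n d F)
    (hsharp : Sharp n d F) (hbrk : brk n d F = n) :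
    Submodule.map (piL n d)
        (ann F ⊓ Scomp n d fun i => if (i : ℕ) = d - 1 then 0 else 1) =
      ann (pF n d F) ⊓ Vcomp n (d - 1) :=
  stmt_13_general n d hd F hF hsym

end BorderComon
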